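/- With K_A ⊆ V_A and K_B ⊆ V_B as in the GPT setup, suppose in addition that K_B is a simplex, i.e., K_B is the convex hull of a finite linearly independent set {s_1, …, s_n} ⊆ V_B (which then spans V_B). Then the minimal and maximal tensor products coincide: K_A ⊗min K_B = K_A ⊗max K_B; in other words, there are no entangled states when one factor is classical. -/

import Mathlib

open TensorProduct

/-- The linear functional `f ⊗ g` on `V ⊗ W` induced by linear functionals `f, g`. -/
noncomputable def tensorFunctional {V W : Type*} [AddCommGroup V] [Module ℝ V]
    [AddCommGroup W] [Module ℝ W] (f : V →ₗ[ℝ] ℝ) (g : W →ₗ[ℝ] ℝ) :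
    V ⊗[ℝ] W →ₗ[ℝ] ℝ :=
  TensorProduct.lift ((LinearMap.mul ℝ ℝ).compl₁₂ f g)

/-- The minimal tensor product of two state spaces. -/
noncomputable def minTensor {V W : Type*} [AddCommGroup V] [Module ℝ V]
    [AddCommGroup W] [Module ℝ W] (K : Set V) (L : Set W) : Set (V ⊗[ℝ] W) :=
  convexHull ℝ {z | ∃ x ∈ K, ∃ y ∈ L, z = x ⊗ₜ[ℝ] y}

/-- The maximal tensor product of two state spaces with unit functionals `eK, eL`. -/
noncomputable def maxTensor {V W : Type*} [AddCommGroup V] [Module ℝ V]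
    [AddCommGroup W] [Module ℝ W] (K : Set V) (L : Set W)
    (eK : V →ₗ[ℝ] ℝ) (eL : W →ₗ[ℝ] ℝ) : Set (V ⊗[ℝ] W) :=
  {z | (∀ f : V →ₗ[ℝ] ℝ, ∀ g : W →ₗ[ℝ] ℝ, (∀ x ∈ K, 0 ≤ f x ∧ f x ≤ 1) →
        (∀ y ∈ L, 0 ≤ g y ∧ g y ≤ 1) → 0 ≤ tensorFunctional f g z) ∧
      tensorFunctional eK eL z = 1}

/-!
The positive cone dual to the effects on a compact convex state space `K` is the cone over `K`
(Hahn–Banach), so an element of the maximal tensor product `K ⊗max Δ` pairs with the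
coordinate functionals of the simplex `Δ` to give vectors `xᵢ = λᵢ pᵢ` with `pᵢ ∈ K`,
`λᵢ ≥ 0` and `∑ λᵢ = 1`. Expanding in the basis of vertices, `z = ∑ λᵢ pᵢ ⊗ sᵢ` is separable.
-/

def IsEffect {V : Type*} [AddCommGroup V] [Module ℝ V] (K : Set V) (f : V →ₗ[ℝ] ℝ) : Prop :=
  ∀ x ∈ K, 0 ≤ f x ∧ f x ≤ 1

lemma isEffect_of_eq_one {V : Type*} [AddCommGroup V] [Module ℝ V] {K : Set V}
    {e : V →ₗ[ℝ] ℝ} (he : ∀ x ∈ K, e x = 1) : IsEffect K e :=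
  fun x hx => by simp [he x hx]

lemma tensorFunctional_tmul {V W : Type*} [AddCommGroup V] [Module ℝ V]
    [AddCommGroup W] [Module ℝ W] (f : V →ₗ[ℝ] ℝ) (g : W →ₗ[ℝ] ℝ) (x : V) (y : W) :
    tensorFunctional f g (x ⊗ₜ[ℝ] y) = f x * g y := rfl

lemma minTensor_subset_maxTensor {V W : Type*} [AddCommGroup V] [Module ℝ V]
    [AddCommGroup W] [Module ℝ W] {K : Set V} {L : Set W} {eK : V →ₗ[ℝ] ℝ} {eL : W →ₗ[ℝ] ℝ}
    (heK : ∀ x ∈ K, eK x = 1) (heL : ∀ y ∈ L, eL y = 1) :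
    minTensor K L ⊆ maxTensor K L eK eL := by
  refine convexHull_min ?_ ?_
  · rintro z ⟨x, hx, y, hy, rfl⟩
    refine ⟨fun f g hf hg => mul_nonneg (hf x hx).1 (hg y hy).1, ?_⟩
    rw [tensorFunctional_tmul, heK x hx, heL y hy, one_mul]
  · intro z₁ h₁ z₂ h₂ a b ha hb hab
    simp only [maxTensor, Set.mem_ofPred_eq, map_add, map_smul, smul_eq_mul, h₁.2, h₂.2]
    exact ⟨fun f g hf hg => add_nonneg (mul_nonneg ha (h₁.1 f g hf hg))
      (mul_nonneg hb (h₂.1 f g hf hg)), by linarith⟩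

section ConeDuality

variable {V : Type*} [NormedAddCommGroup V] [NormedSpace ℝ V] [FiniteDimensional ℝ V]
  {K : Set V} {e : V →ₗ[ℝ] ℝ}

lemma exists_isEffect_smul_sub (hne : K.Nonempty) (hcomp : IsCompact K)
    (he : ∀ x ∈ K, e x = 1) (h : V →ₗ[ℝ] ℝ) :
    ∃ y₀ ∈ K, ∃ c : ℝ, 0 < c ∧ IsEffect K (c • (h - h y₀ • e)) := by
  have hcont := h.continuous_of_finiteDimensional.continuousOn (s := K)
  obtain ⟨y₀, hy₀, hmin⟩ := hcomp.exists_isMinOn hne hcont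
  obtain ⟨y₁, hy₁, hmax⟩ := hcomp.exists_isMaxOn hne hcont
  have hspread : 0 < h y₁ - h y₀ + 1 := by linarith [isMinOn_iff.mp hmin y₁ hy₁]
  refine ⟨y₀, hy₀, (h y₁ - h y₀ + 1)⁻¹, inv_pos.mpr hspread, fun y hy => ?_⟩
  have hlow : h y₀ ≤ h y := hmin hy
  have hhigh : h y ≤ h y₁ := hmax hy
  simp only [LinearMap.smul_apply, LinearMap.sub_apply, smul_eq_mul, he y hy, mul_one]
  refine ⟨mul_nonneg (inv_nonneg.mpr hspread.le) (by linarith), ?_⟩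
  rw [inv_mul_le_iff₀ hspread]
  linarith

lemma eq_zero_of_forall_isEffect_nonneg (hne : K.Nonempty) (hcomp : IsCompact K)
    (he : ∀ x ∈ K, e x = 1) {x : V} (hx : ∀ f, IsEffect K f → 0 ≤ f x) (hex : e x = 0) :
    x = 0 := by
  have hnonneg : ∀ h : V →ₗ[ℝ] ℝ, 0 ≤ h x := fun h => by
    obtain ⟨y₀, -, c, hc, hf⟩ := exists_isEffect_smul_sub hne hcomp he h
    have := hx _ hf
    simp only [LinearMap.smul_apply, LinearMap.sub_apply, smul_eq_mul, hex, mul_zero,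
      sub_zero] at this
    exact nonneg_of_mul_nonneg_right this hc
  refine (Module.forall_dual_apply_eq_zero_iff ℝ x).mp fun h => ?_
  linarith [hnonneg h, hnonneg (-h), LinearMap.neg_apply h x]

lemma mem_of_forall_isEffect_nonneg (hne : K.Nonempty) (hcomp : IsCompact K)
    (hconv : Convex ℝ K) (he : ∀ x ∈ K, e x = 1) {x : V}
    (hx : ∀ f, IsEffect K f → 0 ≤ f x) (hex : e x = 1) : x ∈ K := by
  by_contra hxK
  -- a functional separating `x` from `K`, shifted into an effect, is negative at `x`
  obtain ⟨f, u, hfK, hfx⟩ := geometric_hahn_banach_closed_point hconv hcomp.isClosed hxK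
  obtain ⟨y₀, hy₀, c, hc, heff⟩ := exists_isEffect_smul_sub hne hcomp he (-(f : V →ₗ[ℝ] ℝ))
  have := hx _ heff
  simp only [LinearMap.smul_apply, LinearMap.sub_apply, LinearMap.neg_apply, smul_eq_mul, hex,
    mul_one, ContinuousLinearMap.coe_coe] at this
  linarith [nonneg_of_mul_nonneg_right this hc, hfK y₀ hy₀]

lemma exists_mem_eq_smul_of_forall_isEffect_nonneg (hne : K.Nonempty) (hcomp : IsCompact K)
    (hconv : Convex ℝ K) (he : ∀ x ∈ K, e x = 1) {x : V}
    (hx : ∀ f, IsEffect K f → 0 ≤ f x) : ∃ p ∈ K, x = e x • p := by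
  by_cases hex : e x = 0
  · refine ⟨hne.some, hne.some_mem, ?_⟩
    rw [hex, zero_smul, eq_zero_of_forall_isEffect_nonneg hne hcomp he hx hex]
  refine ⟨(e x)⁻¹ • x, mem_of_forall_isEffect_nonneg hne hcomp hconv he (fun f hf => ?_) ?_, ?_⟩
  · rw [map_smul, smul_eq_mul]
    exact mul_nonneg (inv_nonneg.mpr (hx e (isEffect_of_eq_one he))) (hx f hf)
  · rw [map_smul, smul_eq_mul, inv_mul_cancel₀ hex]
  · rw [smul_smul, mul_inv_cancel₀ hex, one_smul]

end ConeDuality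

section Simplex

variable {ι W : Type*} [AddCommGroup W] [Module ℝ W]

lemma Module.Basis.isEffect_coord_convexHull (b : Module.Basis ι ℝ W) (i : ι) :
    IsEffect (convexHull ℝ (Set.range b)) (b.coord i) := by
  classical
  suffices convexHull ℝ (Set.range b) ⊆ b.coord i ⁻¹' Set.Icc 0 1 from fun y hy => this hy
  refine convexHull_min ?_ ((convex_Icc 0 1).linear_preimage _)
  rintro _ ⟨j, rfl⟩
  simp only [Set.mem_preimage, Module.Basis.coord_apply, Module.Basis.repr_self,
    Finsupp.single_apply, Set.mem_Icc]
  split_ifs <;> norm_num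

lemma tensorFunctional_coord {V : Type*} [AddCommGroup V] [Module ℝ V] [DecidableEq ι]
    (b : Module.Basis ι ℝ W) (f : V →ₗ[ℝ] ℝ) (i : ι) (z : V ⊗[ℝ] W) :
    tensorFunctional f (b.coord i) z = f (equivFinsuppOfBasisRight b z i) := by
  induction z with
  | zero => simp
  | tmul x y =>
    rw [tensorFunctional_tmul, equivFinsuppOfBasisRight_apply_tmul_apply, map_smul, smul_eq_mul,
      Module.Basis.coord_apply, mul_comm]
  | add z₁ z₂ h₁ h₂ => simp only [map_add, Finsupp.add_apply, h₁, h₂]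

lemma sum_tmul_equivFinsuppOfBasisRight {V : Type*} [AddCommGroup V] [Module ℝ V]
    [Fintype ι] [DecidableEq ι] (b : Module.Basis ι ℝ W) (z : V ⊗[ℝ] W) :
    ∑ i, equivFinsuppOfBasisRight b z i ⊗ₜ[ℝ] b i = z := by
  conv_rhs => rw [← (equivFinsuppOfBasisRight b).symm_apply_apply z]
  rw [equivFinsuppOfBasisRight_symm_apply, Finsupp.sum_fintype _ _ (by simp)]

lemma maxTensor_convexHull_basis_subset_minTensor {V : Type*} [NormedAddCommGroup V]
    [NormedSpace ℝ V] [FiniteDimensional ℝ V] [Fintype ι] {K : Set V} (hne : K.Nonempty)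
    (hcomp : IsCompact K) (hconv : Convex ℝ K) {eK : V →ₗ[ℝ] ℝ} {eL : W →ₗ[ℝ] ℝ}
    (heK : ∀ x ∈ K, eK x = 1) (b : Module.Basis ι ℝ W) (heL : ∀ i, eL (b i) = 1) :
    maxTensor K (convexHull ℝ (Set.range b)) eK eL ⊆
      minTensor K (convexHull ℝ (Set.range b)) := by
  classical
  rintro z ⟨hpos, hunit⟩
  set x := equivFinsuppOfBasisRight b z
  have hx : ∀ i f, IsEffect K f → 0 ≤ f (x i) := fun i f hf => by
    rw [← tensorFunctional_coord]
    exact hpos f _ hf (b.isEffect_coord_convexHull i)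
  choose p hpK hxp using fun i => exists_mem_eq_smul_of_forall_isEffect_nonneg hne hcomp hconv
    heK (hx i)
  have hsum : ∑ i, eK (x i) = 1 := by
    rw [← hunit, ← sum_tmul_equivFinsuppOfBasisRight b z, map_sum]
    simp only [tensorFunctional_tmul, heL, mul_one, x]
  have hz : z = ∑ i, eK (x i) • (p i ⊗ₜ[ℝ] b i) := by
    conv_lhs => rw [← sum_tmul_equivFinsuppOfBasisRight b z]
    refine Finset.sum_congr rfl fun i _ => ?_
    rw [smul_tmul', ← hxp i]
  rw [hz]
  refine (convex_convexHull ℝ _).sum_mem (fun i _ => hx i eK (isEffect_of_eq_one heK)) hsum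
    fun i _ => subset_convexHull ℝ _ ⟨p i, hpK i, b i, subset_convexHull ℝ _ ⟨i, rfl⟩, rfl⟩

end Simplex

theorem minTensor_eq_maxTensor_of_simplex_general
    {VA VB : Type*} [NormedAddCommGroup VA] [NormedSpace ℝ VA] [FiniteDimensional ℝ VA]
    [NormedAddCommGroup VB] [NormedSpace ℝ VB] [FiniteDimensional ℝ VB]
    (KA : Set VA) (KB : Set VB)
    (hneA : KA.Nonempty) (hcompA : IsCompact KA) (hconvA : Convex ℝ KA)
    (hspanB : Submodule.span ℝ KB = ⊤)
    (eA : VA →ₗ[ℝ] ℝ) (eB : VB →ₗ[ℝ] ℝ)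
    (heA : ∀ x ∈ KA, eA x = 1) (heB : ∀ y ∈ KB, eB y = 1)
    (S : Finset VB)
    (hind : LinearIndependent ℝ (Subtype.val : {x : VB // x ∈ (S : Set VB)} → VB))
    (hKB : KB = convexHull ℝ (S : Set VB)) :
    minTensor KA KB = maxTensor KA KB eA eB := by
  have hspanS :
      ⊤ ≤ Submodule.span ℝ (Set.range (Subtype.val : {x : VB // x ∈ (S : Set VB)} → VB)) := by
    rw [Subtype.range_coe, ← hspanB, Submodule.span_le, hKB]
    exact convexHull_min Submodule.subset_span (Submodule.span ℝ _).convex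
  set b := Module.Basis.mk hind hspanS
  have hKb : KB = convexHull ℝ (Set.range b) := by
    rw [hKB, Module.Basis.coe_mk, Subtype.range_coe]
  refine (minTensor_subset_maxTensor heA heB).antisymm ?_
  rw [hKb] at heB ⊢
  exact maxTensor_convexHull_basis_subset_minTensor hneA hcompA hconvA heA b
    fun i => heB _ (subset_convexHull ℝ _ ⟨i, rfl⟩)

/-- if `K_B` is a simplex (the convex hull of a finite linearly
independent set), then the minimal and maximal tensor products coincide: there is no
entanglement with a classical system. -/
theorem minTensor_eq_maxTensor_of_simplex
    {VA VB : Type*} [NormedAddCommGroup VA] [NormedSpace ℝ VA] [FiniteDimensional ℝ VA]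
    [NormedAddCommGroup VB] [NormedSpace ℝ VB] [FiniteDimensional ℝ VB]
    (KA : Set VA) (KB : Set VB)
    (hneA : KA.Nonempty) (hcompA : IsCompact KA) (hconvA : Convex ℝ KA)
    (hneB : KB.Nonempty) (hcompB : IsCompact KB) (hconvB : Convex ℝ KB)
    (hspanA : Submodule.span ℝ KA = ⊤) (hspanB : Submodule.span ℝ KB = ⊤)
    (eA : VA →ₗ[ℝ] ℝ) (eB : VB →ₗ[ℝ] ℝ)
    (heA : ∀ x ∈ KA, eA x = 1) (heB : ∀ y ∈ KB, eB y = 1)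
    (S : Finset VB)
    (hind : LinearIndependent ℝ (Subtype.val : {x : VB // x ∈ (S : Set VB)} → VB))
    (hKB : KB = convexHull ℝ (S : Set VB)) :
    minTensor KA KB = maxTensor KA KB eA eB :=
  minTensor_eq_maxTensor_of_simplex_general KA KB hneA hcompA hconvA hspanB eA eB heA heB S hind hKB
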